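/- arXiv:2312.10239 — 4 statements merged into one kernel-verified Lean document; each statement's English description precedes it below -/
import Mathlib

section
/- Let X be a topological space and let 𝒰 : I → Op(X) be a locally finite open cover. Then the canonical map η : X → N_𝒰 to the nerve (with the Alexandroff topology) is continuous. -/
/-- The canonical map `η : X → N_𝒰` to the nerve of a locally finite
open cover, with the Alexandroff topology on the nerve generated by principal
up-sets, is continuous. -/
theorem stmt_1 {X I : Type*} [TopologicalSpace X] (U : I → Set X)
    (hopen : ∀ i, IsOpen (U i)) (hcov : (⋃ i, U i) = Set.univ)
    (hlf : ∀ x : X, {i | x ∈ U i}.Finite)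
    (η : X → {σ : Set I // σ.Finite ∧ (⋂ i ∈ σ, U i).Nonempty})
    (hη : ∀ x, (η x).1 = {i | x ∈ U i}) :
    @Continuous X {σ : Set I // σ.Finite ∧ (⋂ i ∈ σ, U i).Nonempty} _
      (TopologicalSpace.generateFrom
        {S | ∃ σ : {σ : Set I // σ.Finite ∧ (⋂ i ∈ σ, U i).Nonempty},
          S = {τ | σ.1 ⊆ τ.1}}) η := by
  rw [continuous_generateFrom_iff]
  rintro S ⟨σ, rfl⟩
  have : η ⁻¹' {τ | σ.1 ⊆ τ.1} = ⋂ i ∈ σ.1, U i := by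
    ext x
    simp only [Set.mem_preimage, Set.mem_setOf_eq, hη, Set.mem_iInter]
    exact ⟨fun h i hi => h hi, fun h i hi => h i hi⟩
  rw [this]
  exact σ.2.1.isOpen_biInter fun i _ => hopen i
end

section
/- Let X be a locally connected topological space. Then the assignment U ↦ π₀(U) (set of connected components of the open subspace U), with maps π₀(U') → π₀(U) for U' ⊆ U sending a component of U' to the component of U containing it, is a cosheaf: for every open U and every open cover {U_i} of U, the canonical map colim( ⨆_{i,j} π₀(U_i ∩ U_j) ⇉ ⨆_i π₀(U_i) ) → π₀(U) is a bijection. -/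
section Aux

variable {X : Type*} [TopologicalSpace X] {ι : Type*}

/-- The relation generating the coequalizer. -/
abbrev stmt10Rel (W : ι → Set X) :
    (Σ i : ι, ConnectedComponents (W i)) → (Σ i : ι, ConnectedComponents (W i)) → Prop :=
  fun b b' =>
    ∃ a : Σ p : ι × ι, ConnectedComponents ↥(W p.1 ∩ W p.2),
      (⟨a.1.1, (continuous_inclusion Set.inter_subset_left).connectedComponentsMap
          a.2⟩ : Σ i : ι, ConnectedComponents (W i)) = b ∧
      (⟨a.1.2, (continuous_inclusion Set.inter_subset_right).connectedComponentsMap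
          a.2⟩ : Σ i : ι, ConnectedComponents (W i)) = b'

lemma ccMap_mk {α β : Type*} [TopologicalSpace α] [TopologicalSpace β] {f : α → β}
    (h : Continuous f) (x : α) :
    h.connectedComponentsMap (ConnectedComponents.mk x) = ConnectedComponents.mk (f x) :=
  rfl

end Aux

/-- For a locally connected space `X`, `U ↦ π₀(U)` is a cosheaf:
for every open `V` and open cover `{W i}` of `V`, `π₀(V)` is the coequalizer
(in Set) of the two maps `⨆_{i,j} π₀(W i ∩ W j) ⇉ ⨆_i π₀(W i)` induced by the
inclusions, i.e. the canonical map from the quotient is a bijection. -/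
theorem stmt_10 {X : Type*} [TopologicalSpace X] [LocallyConnectedSpace X]
    (V : Set X) (hV : IsOpen V) {ι : Type*} (W : ι → Set X)
    (hWopen : ∀ i, IsOpen (W i)) (hWV : ∀ i, W i ⊆ V)
    (hcov : (⋃ i, W i) = V) :
    ∃ e : Quot (fun b b' : Σ i : ι, ConnectedComponents (W i) =>
        ∃ a : Σ p : ι × ι, ConnectedComponents ↥(W p.1 ∩ W p.2),
          (⟨a.1.1, (continuous_inclusion Set.inter_subset_left).connectedComponentsMap
              a.2⟩ : Σ i : ι, ConnectedComponents (W i)) = b ∧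
          (⟨a.1.2, (continuous_inclusion Set.inter_subset_right).connectedComponentsMap
              a.2⟩ : Σ i : ι, ConnectedComponents (W i)) = b') ≃
        ConnectedComponents V,
      ∀ (i : ι) (c : ConnectedComponents (W i)),
        e (Quot.mk _ ⟨i, c⟩) =
          (continuous_inclusion (hWV i)).connectedComponentsMap c := by
  -- the forward map
  have hsound : ∀ b b', stmt10Rel W b b' →
      (continuous_inclusion (hWV b.1)).connectedComponentsMap b.2 =
      (continuous_inclusion (hWV b'.1)).connectedComponentsMap b'.2 := by
    rintro b b' ⟨⟨⟨i, j⟩, c⟩, rfl, rfl⟩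
    obtain ⟨z, rfl⟩ := ConnectedComponents.surjective_coe c
    rfl
  let φ : Quot (stmt10Rel W) → ConnectedComponents V :=
    Quot.lift (fun b => (continuous_inclusion (hWV b.1)).connectedComponentsMap b.2) hsound
  -- independence of the index for points
  have indep : ∀ (z : X) (i j : ι) (hi : z ∈ W i) (hj : z ∈ W j),
      Quot.mk (stmt10Rel W) ⟨i, ConnectedComponents.mk ⟨z, hi⟩⟩ =
      Quot.mk (stmt10Rel W) ⟨j, ConnectedComponents.mk ⟨z, hj⟩⟩ := by
    intro z i j hi hj
    exact Quot.sound ⟨⟨(i, j), ConnectedComponents.mk ⟨z, ⟨hi, hj⟩⟩⟩, rfl, rfl⟩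
  -- a map from points of V
  have mem_un : ∀ v : V, (v : X) ∈ ⋃ i, W i := fun v => hcov.symm ▸ v.2
  let f : V → Quot (stmt10Rel W) := fun v =>
    Quot.mk (stmt10Rel W) ⟨(Set.mem_iUnion.1 (mem_un v)).choose,
      ConnectedComponents.mk ⟨v.1, (Set.mem_iUnion.1 (mem_un v)).choose_spec⟩⟩
  have f_eq : ∀ (v : V) (i : ι) (hi : (v : X) ∈ W i),
      f v = Quot.mk (stmt10Rel W) ⟨i, ConnectedComponents.mk ⟨v.1, hi⟩⟩ := fun v i hi =>
    indep v.1 _ i (Set.mem_iUnion.1 (mem_un v)).choose_spec hi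
  -- f is locally constant
  have hloc : IsLocallyConstant f := by
    rw [IsLocallyConstant.iff_exists_open]
    intro x
    obtain ⟨i, hi⟩ := Set.mem_iUnion.1 (mem_un x)
    haveI := (hWopen i).locallyConnectedSpace
    refine ⟨Subtype.val ⁻¹' (Subtype.val '' connectedComponent (⟨x.1, hi⟩ : W i)),
      (((hWopen i).isOpenMap_subtype_val _ isOpen_connectedComponent).preimage
        continuous_subtype_val), ⟨⟨x.1, hi⟩, mem_connectedComponent, rfl⟩, ?_⟩
    rintro y ⟨w, hw, hwy⟩
    have hyi : (y : X) ∈ W i := hwy ▸ w.2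
    rw [f_eq y i hyi, f_eq x i hi]
    congr 1
    have : (⟨y.1, hyi⟩ : W i) ∈ connectedComponent (⟨x.1, hi⟩ : W i) := by
      have : w = ⟨y.1, hyi⟩ := Subtype.ext hwy
      exact this ▸ hw
    exact congrArg (Sigma.mk i) (ConnectedComponents.coe_eq_coe.2
      (connectedComponent_eq this).symm)
  -- descend f to connected components
  let g : ConnectedComponents V → Quot (stmt10Rel W) :=
    Quotient.lift f (fun x y (h : connectedComponent x = connectedComponent y) =>
      hloc.apply_eq_of_isPreconnected isPreconnected_connectedComponent
        mem_connectedComponent (h ▸ mem_connectedComponent))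
  have g_mk : ∀ v : V, g (ConnectedComponents.mk v) = f v := fun v => rfl
  -- left inverse
  have left_inv : ∀ q, g (φ q) = q := by
    intro q
    induction q using Quot.ind with
    | _ b =>
      obtain ⟨i, c⟩ := b
      obtain ⟨x, rfl⟩ := ConnectedComponents.surjective_coe c
      have h1 : φ (Quot.mk (stmt10Rel W) ⟨i, ConnectedComponents.mk x⟩) =
          ConnectedComponents.mk ⟨x.1, hWV i x.2⟩ := rfl
      rw [h1, g_mk, f_eq ⟨x.1, hWV i x.2⟩ i x.2]
  have right_inv : ∀ c, φ (g c) = c := by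
    intro c
    obtain ⟨v, rfl⟩ := ConnectedComponents.surjective_coe c
    rw [g_mk]
    obtain ⟨i, hi⟩ := Set.mem_iUnion.1 (mem_un v)
    rw [f_eq v i hi]
    rfl
  exact ⟨⟨φ, g, left_inv, right_inv⟩, fun i c => rfl⟩
end

section
/- Let P be a poset with the Alexandroff topology and let G be a precosheaf on P (a functor from upward-closed subsets of P ordered by inclusion to Set). Then for every p ∈ P and β ∈ G(↑p), the basic open set of the display space, ⟵β_{↑p} := {(α, q) | q ∈ ↑p, α ∈ costalk of G at q, ρ^q_{↑p}(α) = β}, is nonempty and connected. In particular, every precosheaf on an Alexandroff poset is spatial. -/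
universe u v

/-- A precosheaf (of sets) on the poset `P` with the Alexandroff topology:
a functor from the upper (i.e. open) subsets of `P`, ordered by inclusion,
to sets. -/
structure Precosheaf (P : Type u) [PartialOrder P] where
  obj : {S : Set P // IsUpperSet S} → Type v
  map : ∀ {S T : {S : Set P // IsUpperSet S}}, S.1 ⊆ T.1 → obj S → obj T
  map_id : ∀ (S : {S : Set P // IsUpperSet S}) (a : obj S),
    map (subset_refl S.1) a = a
  map_comp : ∀ {S T R : {S : Set P // IsUpperSet S}} (h : S.1 ⊆ T.1)
    (h' : T.1 ⊆ R.1) (a : obj S), map h' (map h a) = map (h.trans h') a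

variable {P : Type u} [PartialOrder P]

/-- The costalk of `G` at `q`: the limit of `G` over the open neighborhoods
of `q`, presented as consistent families. -/
def Costalk (G : Precosheaf P) (q : P) : Type _ :=
  {f : ∀ S : {S : {S : Set P // IsUpperSet S} // q ∈ S.1}, G.obj S.1 //
    ∀ (S T : {S : {S : Set P // IsUpperSet S} // q ∈ S.1})
      (h : S.1.1 ⊆ T.1.1), G.map h (f S) = f T}

/-- The display space of `G`: the disjoint union of the costalks. -/
def Display (G : Precosheaf P) : Type _ := Σ q : P, Costalk G q

/-- The basic open set `⟵β_S = {(α,q) | q ∈ S and ρ^q_S(α) = β}`. -/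
def basicOpen (G : Precosheaf P) (S : {S : Set P // IsUpperSet S})
    (β : G.obj S) : Set (Display G) :=
  {d | ∃ h : d.1 ∈ S.1, d.2.1 ⟨S, h⟩ = β}

/-- The display space topology, generated by the basic open sets. -/
instance displayTop (G : Precosheaf P) : TopologicalSpace (Display G) :=
  TopologicalSpace.generateFrom
    {T | ∃ (S : {S : Set P // IsUpperSet S}) (β : G.obj S), T = basicOpen G S β}

/-- For every `p ∈ P` and `β ∈ G(↑p)`, the basic open set
`⟵β_{↑p}` of the display space is nonempty and connected; in particular every
precosheaf on an Alexandroff poset is spatial. -/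
theorem stmt_11 (G : Precosheaf P) (p : P)
    (β : G.obj ⟨Set.Ici p, isUpperSet_Ici p⟩) :
    (basicOpen G ⟨Set.Ici p, isUpperSet_Ici p⟩ β).Nonempty ∧
    IsConnected (basicOpen G ⟨Set.Ici p, isUpperSet_Ici p⟩ β) := by
  classical
  let Ip : {S : Set P // IsUpperSet S} := ⟨Set.Ici p, isUpperSet_Ici p⟩
  have hsub : ∀ S : {S : {S : Set P // IsUpperSet S} // p ∈ S.1}, Ip.1 ⊆ S.1.1 :=
    fun S x hx => S.1.2 hx S.2
  -- the canonical point over p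
  let f : Costalk G p := ⟨fun S => G.map (hsub S) β, by
    intro S T h
    rw [G.map_comp]⟩
  have hpIp : p ∈ Ip.1 := le_refl p
  let x₀ : Display G := ⟨p, f⟩
  have hx₀mem : x₀ ∈ basicOpen G Ip β := by
    refine ⟨hpIp, ?_⟩
    show G.map (hsub ⟨Ip, hpIp⟩) β = β
    exact G.map_id Ip β
  -- key: every open set containing x₀ contains every point of basicOpen Ip β
  have key : ∀ (y : Display G), y ∈ basicOpen G Ip β →
      ∀ U : Set (Display G), IsOpen U → x₀ ∈ U → y ∈ U := by
    rintro ⟨q, α⟩ ⟨hq, hβ⟩ U hU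
    induction hU with
    | basic V hV =>
      obtain ⟨S, γ, rfl⟩ := hV
      rintro ⟨hpS, hγ⟩
      have hqS : q ∈ S.1 := S.2 hq hpS
      refine ⟨hqS, ?_⟩
      have h1 : G.map (hsub ⟨S, hpS⟩) (α.1 ⟨Ip, hq⟩) = α.1 ⟨S, hqS⟩ :=
        α.2 ⟨Ip, hq⟩ ⟨S, hqS⟩ (hsub ⟨S, hpS⟩)
      rw [← h1, hβ]
      exact hγ
    | univ => intro; trivial
    | inter U V _ _ ihU ihV => exact fun h => ⟨ihU h.1, ihV h.2⟩
    | sUnion 𝒮 _ ih =>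
      rintro ⟨V, hV, hx⟩
      exact ⟨V, hV, ih V hV hx⟩
  refine ⟨⟨x₀, hx₀mem⟩, ⟨x₀, hx₀mem⟩, ?_⟩
  apply isPreconnected_of_forall x₀
  intro y hy
  refine ⟨{y, x₀}, ?_, Or.inr rfl, Or.inl rfl, ?_⟩
  · rintro z (rfl | rfl)
    · exact hy
    · exact hx₀mem
  · have hcl : x₀ ∈ closure {y} := by
      rw [mem_closure_iff]
      intro o ho hx₀o
      exact ⟨y, key y hy o ho hx₀o, rfl⟩
    refine isPreconnected_singleton.subset_closure (s := {y}) ?_ ?_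
    · intro z hz; exact Or.inl hz
    · rintro z (rfl | rfl)
      · exact subset_closure rfl
      · exact hcl
end

section
/- Let 𝒰 : P^op → pOp(X) be a strict refinement of locally finite good open covers of X indexed by a FINITE poset P. Then the canonical map η̂ : X → lim N_𝒰 is continuous, where lim N_𝒰 carries the Alexandroff topology of its componentwise-inclusion order. Explicitly, for every open (up-closed) subset S of lim N_𝒰, η̂⁻¹(S) = ⋃_{σ∈S} ⋂_{p∈P} 𝒰^p_σ, where 𝒰^p_σ = η_p⁻¹(↑σ^p); finiteness of P ensures each ⋂_{p∈P} 𝒰^p_σ is a finite intersection of open sets, hence open. -/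
section

variable {X : Type*} [TopologicalSpace X] {P : Type*} [PartialOrder P]
  {I : P → Type*} (UU : ∀ p, I p → Set X)

/-- The nerve of the cover `UU p`. -/
def Nrv (p : P) : Type _ :=
  {σ : Set (I p) // σ.Finite ∧ (⋂ i ∈ σ, UU p i).Nonempty}

/-- The Alexandroff topology on the nerve, generated by principal up-sets. -/
def nrvTop (p : P) : TopologicalSpace (Nrv UU p) :=
  TopologicalSpace.generateFrom
    {S | ∃ σ : Nrv UU p, S = {τ : Nrv UU p | σ.1 ⊆ τ.1}}

variable (nerveMap : ∀ {p q : P}, p ≤ q → Nrv UU q → Nrv UU p)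

/-- The limit of the nerves: consistent families. -/
def LimNrv : Type _ :=
  {σ : ∀ p, Nrv UU p // ∀ (p q : P) (h : p ≤ q), nerveMap h (σ q) = σ p}

/-- The initial topology on the limit of nerves, induced by the canonical
projections to the nerves with their Alexandroff topologies. -/
def limNrvTop : TopologicalSpace (LimNrv UU nerveMap) :=
  ⨅ p : P, TopologicalSpace.induced (fun s : LimNrv UU nerveMap => s.1 p)
    (nrvTop UU p)

/-- The principal up-set `↑σ` in the limit poset (componentwise inclusion). -/
def upSetLim (σ : LimNrv UU nerveMap) : Set (LimNrv UU nerveMap) :=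
  {τ | ∀ p, (σ.1 p).1 ⊆ (τ.1 p).1}


/-- For a strict refinement of locally finite good open covers
indexed by a FINITE poset `P`, the canonical map `ηhat : X → lim N_𝒰` is
continuous for the Alexandroff topology of the componentwise-inclusion order
on `lim N_𝒰`, and for every open (up-closed) `S ⊆ lim N_𝒰`,
`ηhat⁻¹(S) = ⋃_{σ∈S} ⋂_{p∈P} 𝒰^p_σ` where `𝒰^p_σ = η_p⁻¹(↑σ^p)`. -/
theorem stmt_15 [Finite P]
    (hopen : ∀ p i, IsOpen (UU p i))
    (hcov : ∀ p, (⋃ i, UU p i) = Set.univ)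
    (hlf : ∀ p (x : X), {i | x ∈ UU p i}.Finite)
    (hgood : ∀ (p : P) (σ : Set (I p)), σ.Finite →
      (⋂ i ∈ σ, UU p i).Nonempty → IsConnected (⋂ i ∈ σ, UU p i))
    (reindex : ∀ {p q : P}, p ≤ q → I q → I p)
    (hrefine : ∀ {p q : P} (h : p ≤ q) (j : I q), UU q j ⊆ UU p (reindex h j))
    (ηp : ∀ p, X → Nrv UU p)
    (hηp : ∀ p x, (ηp p x).1 = {i | x ∈ UU p i})
    (hmap : ∀ {p q : P} (h : p ≤ q) (σ : Nrv UU q),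
      (nerveMap h σ).1 = reindex h '' σ.1)
    (hstrict : ∀ {p q : P} (h : p ≤ q) (x : X), nerveMap h (ηp q x) = ηp p x)
    (ηhat : X → LimNrv UU nerveMap)
    (hηhat : ∀ (p : P) (x : X), (ηhat x).1 p = ηp p x) :
    @Continuous X _ _ (TopologicalSpace.generateFrom
        {S | ∃ σ : LimNrv UU nerveMap, S = upSetLim UU nerveMap σ}) ηhat ∧
    ∀ S : Set (LimNrv UU nerveMap),
      (∀ σ τ : LimNrv UU nerveMap, σ ∈ S → (∀ p, (σ.1 p).1 ⊆ (τ.1 p).1) →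
        τ ∈ S) →
      ηhat ⁻¹' S =
        ⋃ σ ∈ S, ⋂ p : P, (ηp p) ⁻¹' {τ : Nrv UU p | (σ.1 p).1 ⊆ τ.1} := by
  have key : ∀ σ : LimNrv UU nerveMap,
      IsOpen (ηhat ⁻¹' upSetLim UU nerveMap σ) := by
    intro σ
    have heq : ηhat ⁻¹' upSetLim UU nerveMap σ =
        ⋂ p : P, ⋂ i ∈ (σ.1 p).1, UU p i := by
      ext x
      simp only [Set.mem_preimage, upSetLim, Set.mem_setOf_eq, Set.mem_iInter]
      constructor
      · intro h p i hi
        have := h p hi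
        rw [hηhat, hηp] at this
        exact this
      · intro h p i hi
        rw [hηhat, hηp]
        exact h p i hi
    rw [heq]
    exact isOpen_iInter_of_finite fun p =>
      (σ.1 p).2.1.isOpen_biInter fun i _ => hopen p i
  constructor
  · apply continuous_generateFrom_iff.mpr
    rintro S ⟨σ, rfl⟩
    exact key σ
  · intro S hS
    ext x
    simp only [Set.mem_preimage, Set.mem_iUnion, Set.mem_iInter,
      Set.mem_setOf_eq]
    constructor
    · intro hx
      exact ⟨ηhat x, hx, fun p => by rw [hηhat]⟩
    · rintro ⟨σ, hσ, h⟩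
      refine hS σ (ηhat x) hσ fun p => ?_
      rw [hηhat]
      exact h p

end
end
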